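/- Let f : E → ℝ be uniformly convex of degree q with constant σ > 0, where 2 ≤ q < p + 1 and p ≥ 1 is an integer, and let f* be its minimum value. Fix L > 0 and let (x_k)_{k≥0} be a sequence in E such that, for every k, there exists a p-th order surrogate g_k of f at x_k with error constant L, and x_{k+1} is a global minimizer of g_k over E. Then for every k ≥ 0: f(x_{k+1}) − f* ≤ (L/(p+1)!) · (q/σ)^{(p+1)/q} · (f(x_k) − f*)^{(p+1)/q}. -/

import Mathlib

/-! Since `x*` minimizes `f`, `0` is a subgradient there, so uniform convexity gives
`‖x - x*‖ ^ q ≤ (q / σ) (f x - f x*)`. The error `h = g_k - f` vanishes to order `p` at `x_k`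
and has `L`-Lipschitz `p`-th derivative, so integrating `p + 1` times along segments from `x_k`
gives `|h y| ≤ L / (p + 1)! ‖y - x_k‖ ^ (p + 1)`. Hence
`f x_{k+1} ≤ g_k x_{k+1} ≤ g_k x* ≤ f x* + L / (p + 1)! ‖x* - x_k‖ ^ (p + 1)`,
and the first bound turns the distance into a power of `f x_k - f x*`. -/

open scoped RealInnerProductSpace BigOperators
open Set

variable {E : Type*} [NormedAddCommGroup E] [InnerProductSpace ℝ E] [FiniteDimensional ℝ E]

def HasLipschitzDerivOfOrder (p : ℕ) (L : ℝ) (ψ : E → ℝ) : Prop :=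
  ContDiff ℝ p ψ ∧
    ∀ x y : E, ‖iteratedFDeriv ℝ p ψ x - iteratedFDeriv ℝ p ψ y‖ ≤ L * ‖x - y‖

def IsSurrogate (p : ℕ) (L : ℝ) (f g : E → ℝ) (x : E) : Prop :=
  (∀ y : E, f y ≤ g y) ∧
  HasLipschitzDerivOfOrder p L (fun y => g y - f y) ∧
  g x - f x = 0 ∧
  ∀ i : ℕ, 1 ≤ i → i ≤ p → iteratedFDeriv ℝ i (fun y => g y - f y) x = 0

def SubgradAt (f : E → ℝ) (x v : E) : Prop :=
  ∀ y : E, f x + ⟪v, y - x⟫ ≤ f y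

def UniformlyConvexOfDegree (q σ : ℝ) (f : E → ℝ) : Prop :=
  ∀ x v : E, SubgradAt f x v →
    ∀ y : E, f x + ⟪v, y - x⟫ + σ / q * ‖y - x‖ ^ q ≤ f y

section Taylor

variable {F G : Type*} [NormedAddCommGroup F] [NormedSpace ℝ F]
  [NormedAddCommGroup G] [NormedSpace ℝ G]

theorem norm_le_of_norm_fderiv_le_pow {φ : F → G} (hφ : Differentiable ℝ φ) {x : F}
    (hx : φ x = 0) {C : ℝ} {n : ℕ} (hbound : ∀ y, ‖fderiv ℝ φ y‖ ≤ C * ‖y - x‖ ^ n) (y : F) :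
    ‖φ y‖ ≤ C / (n + 1) * ‖y - x‖ ^ (n + 1) := by
  set v := y - x
  have hcurve : ∀ t : ℝ, HasDerivAt (fun t : ℝ => φ (x + t • v)) (fderiv ℝ φ (x + t • v) v) t :=
    fun t => (hφ _).hasFDerivAt.comp_hasDerivAt t
      (by simpa using ((hasDerivAt_id t).smul_const v).const_add x)
  have hB : ∀ t : ℝ, HasDerivAt (fun t : ℝ => C / (n + 1) * ‖v‖ ^ (n + 1) * t ^ (n + 1))
      (C * ‖v‖ ^ (n + 1) * t ^ n) t := by
    intro t
    refine ((hasDerivAt_pow (n + 1) t).const_mul _).congr_deriv ?_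
    push_cast
    field_simp
  have hderiv : ∀ t ∈ Ico (0 : ℝ) 1, ‖fderiv ℝ φ (x + t • v) v‖ ≤ C * ‖v‖ ^ (n + 1) * t ^ n := by
    intro t ht
    calc ‖fderiv ℝ φ (x + t • v) v‖ ≤ ‖fderiv ℝ φ (x + t • v)‖ * ‖v‖ :=
          (fderiv ℝ φ _).le_opNorm v
      _ ≤ C * ‖t • v‖ ^ n * ‖v‖ := by
          gcongr
          simpa using hbound (x + t • v)
      _ = C * ‖v‖ ^ (n + 1) * t ^ n := by
          rw [norm_smul, Real.norm_of_nonneg ht.1]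
          ring
  have hend := image_norm_le_of_norm_deriv_right_le_deriv_boundary
    (fun t _ => (hcurve t).continuousAt.continuousWithinAt) (fun t _ => (hcurve t).hasDerivWithinAt)
    (by simp [hx]) hB hderiv (right_mem_Icc.2 zero_le_one)
  simpa [v] using hend

theorem norm_le_of_iteratedFDeriv_eq_zero_of_lipschitz {h : F → G} {p : ℕ} {L : ℝ} {x : F}
    (hh : ContDiff ℝ p h) (hvan : ∀ i ≤ p, iteratedFDeriv ℝ i h x = 0)
    (hlip : ∀ y, ‖iteratedFDeriv ℝ p h y - iteratedFDeriv ℝ p h x‖ ≤ L * ‖y - x‖) (y : F) :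
    ‖h y‖ ≤ L / (p + 1).factorial * ‖y - x‖ ^ (p + 1) := by
  have key : ∀ j ≤ p, ∀ y,
      ‖iteratedFDeriv ℝ (p - j) h y‖ ≤ L / (j + 1).factorial * ‖y - x‖ ^ (j + 1) := by
    intro j
    induction j with
    | zero => intro _ y; simpa [hvan p le_rfl] using hlip y
    | succ j ih =>
      intro hj y
      have hsucc : p - (j + 1) + 1 = p - j := by omega
      have step := norm_le_of_norm_fderiv_le_pow (φ := iteratedFDeriv ℝ (p - (j + 1)) h)
        (hh.differentiable_iteratedFDeriv (by norm_cast; omega)) (hvan _ (by omega))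
        (fun z => by rw [norm_fderiv_iteratedFDeriv, hsucc]; exact ih (by omega) z) y
      convert step using 2
      rw [Nat.factorial_succ]
      push_cast
      field_simp
  have h0 : ‖iteratedFDeriv ℝ 0 h y‖ ≤ L / (p + 1).factorial * ‖y - x‖ ^ (p + 1) :=
    Nat.sub_self p ▸ key p le_rfl y
  rwa [norm_iteratedFDeriv_zero] at h0

end Taylor

section Surrogate

variable {V : Type*} [NormedAddCommGroup V] [InnerProductSpace ℝ V]
  {p : ℕ} {L : ℝ} {f g : V → ℝ} {x : V}

theorem IsSurrogate.iteratedFDeriv_sub_eq_zero (hg : IsSurrogate p L f g x) :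
    ∀ i ≤ p, iteratedFDeriv ℝ i (fun y => g y - f y) x = 0 := by
  intro i hi
  rcases Nat.eq_zero_or_pos i with rfl | hpos
  · ext; simpa using hg.2.2.1
  · exact hg.2.2.2 i hpos hi

theorem IsSurrogate.sub_le (hg : IsSurrogate p L f g x) (y : V) :
    g y - f y ≤ L / (p + 1).factorial * ‖y - x‖ ^ (p + 1) :=
  (le_abs_self _).trans <| norm_le_of_iteratedFDeriv_eq_zero_of_lipschitz hg.2.1.1
    hg.iteratedFDeriv_sub_eq_zero (fun y => hg.2.1.2 y x) y

theorem IsSurrogate.apply_le_of_isMinimizer (hg : IsSurrogate p L f g x) {x' : V}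
    (hx' : ∀ y, g x' ≤ g y) (y : V) :
    f x' ≤ f y + L / (p + 1).factorial * ‖y - x‖ ^ (p + 1) := by
  linarith [hg.1 x', hx' y, hg.sub_le y]

theorem UniformlyConvexOfDegree.norm_sub_rpow_le {q σ : ℝ} {f : V → ℝ}
    (huc : UniformlyConvexOfDegree q σ f) (hσ : 0 < σ) (hq : 0 < q) {xstar : V}
    (hmin : ∀ y, f xstar ≤ f y) (y : V) :
    ‖y - xstar‖ ^ q ≤ q / σ * (f y - f xstar) := by
  have hconv := huc xstar 0 (fun y => by simpa using hmin y) y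
  rw [inner_zero_left, add_zero] at hconv
  calc ‖y - xstar‖ ^ q = q / σ * (σ / q * ‖y - xstar‖ ^ q) := by field_simp
    _ ≤ q / σ * (f y - f xstar) := by gcongr; linarith

end Surrogate

theorem pow_le_rpow_div_of_rpow_le {a b q : ℝ} (ha : 0 ≤ a) (hq : 0 < q) (hab : a ^ q ≤ b)
    (n : ℕ) : a ^ n ≤ b ^ ((n : ℝ) / q) := by
  calc a ^ n = (a ^ q) ^ ((n : ℝ) / q) := by
        rw [← Real.rpow_natCast, ← Real.rpow_mul ha, mul_div_cancel₀ _ hq.ne']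
    _ ≤ b ^ ((n : ℝ) / q) := by gcongr

theorem ghom_uniformly_convex_superlinear_funvals'_general
    (f : E → ℝ) (q σ : ℝ) (hσ : 0 < σ)
    (p : ℕ) (hq : 2 ≤ q)
    (huc : UniformlyConvexOfDegree q σ f)
    (xstar : E) (hmin : ∀ y : E, f xstar ≤ f y)
    (L : ℝ) (hL : 0 < L)
    (x : ℕ → E)
    (hstep : ∀ k : ℕ, ∃ g : E → ℝ, IsSurrogate p L f g (x k) ∧
      ∀ y : E, g (x (k + 1)) ≤ g y) :
    ∀ k : ℕ,
      f (x (k + 1)) - f xstar ≤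
        L / (Nat.factorial (p + 1) : ℝ) * (q / σ) ^ (((p : ℝ) + 1) / q) *
          (f (x k) - f xstar) ^ (((p : ℝ) + 1) / q) := by
  intro k
  obtain ⟨g, hg, hgmin⟩ := hstep k
  have hq0 : 0 < q := by linarith
  have hdist : ‖xstar - x k‖ ^ (p + 1) ≤ (q / σ * (f (x k) - f xstar)) ^ (((p : ℝ) + 1) / q) := by
    rw [norm_sub_rev]
    exact_mod_cast pow_le_rpow_div_of_rpow_le (norm_nonneg _) hq0
      (huc.norm_sub_rpow_le hσ hq0 hmin (x k)) (p + 1)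
  calc f (x (k + 1)) - f xstar ≤ L / (p + 1).factorial * ‖xstar - x k‖ ^ (p + 1) := by
        linarith [hg.apply_le_of_isMinimizer hgmin xstar]
    _ ≤ L / (p + 1).factorial * (q / σ * (f (x k) - f xstar)) ^ (((p : ℝ) + 1) / q) := by
        gcongr
    _ = _ := by
        rw [Real.mul_rpow (div_pos hq0 hσ).le (sub_nonneg.2 (hmin _)), mul_assoc]

/-- Local superlinear convergence in function values of GHOM for uniformly convex
objectives of degree `q < p + 1` (without convexity of the error functions). -/
theorem ghom_uniformly_convex_superlinear_funvals'
    (f : E → ℝ) (q σ : ℝ) (hσ : 0 < σ)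
    (p : ℕ) (hp : 1 ≤ p) (hq : 2 ≤ q) (hqp : q < (p : ℝ) + 1)
    (huc : UniformlyConvexOfDegree q σ f)
    (xstar : E) (hmin : ∀ y : E, f xstar ≤ f y)
    (L : ℝ) (hL : 0 < L)
    (x : ℕ → E)
    (hstep : ∀ k : ℕ, ∃ g : E → ℝ, IsSurrogate p L f g (x k) ∧
      ∀ y : E, g (x (k + 1)) ≤ g y) :
    ∀ k : ℕ,
      f (x (k + 1)) - f xstar ≤
        L / (Nat.factorial (p + 1) : ℝ) * (q / σ) ^ (((p : ℝ) + 1) / q) *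
          (f (x k) - f xstar) ^ (((p : ℝ) + 1) / q) :=
  ghom_uniformly_convex_superlinear_funvals'_general f q σ hσ p hq huc xstar hmin L hL x hstep
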